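/- arXiv:2302.00232 — 2 statements merged into one kernel-verified Lean document; each statement's English description precedes it below -/
import Mathlib

section
/- Let N ≥ 2 and let n_1, …, n_N be positive integers, V_u > 0 and V_u^b > 0 real numbers, g ∈ ℝ^{n_N}. Let A₁ be an n_N×n_1 real matrix and, for l = 2, …, N, let B_l be an n_{l−1}×n_l real matrix. For each l = 1, …, N let (e^l[t])_{t≥1} be a bounded sequence in ℝ^{n_l}. Define sequences β^l[t] ∈ ℝ^{n_l} by β^l[0] = 0 for all l, and for t ≥ 0: β^N[t+1] = φ((1/V_u^b)·((t/(t+1))·(1/V_u)·A₁·β^1[t] + g)) − (1/V_u^b)·e^N[t+1]/(t+1), and β^l[t+1] = φ((1/V_u^b)·(1/V_u)·B_{l+1}·β^{l+1}[t+1]) − (1/V_u^b)·e^l[t+1]/(t+1) for l = N−1, …, 1. If there exists γ < 1 such that ‖A₁‖₂·‖B_N‖₂·⋯·‖B₂‖₂ ≤ γ·V_u^N·(V_u^b)^N, then for each l the sequence β^l[t] converges to a limit β^{l*} ∈ ℝ^{n_l}; moreover β^{N*} = φ((1/V_u^b)·((1/V_u)·A₁·β^{1*} + g)) and β^{l*}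 = φ((1/V_u^b)·(1/V_u)·B_{l+1}·β^{(l+1)*}) for l = N−1, …, 1. -/
open Filter Topology

/-- Euclidean norm of a vector in `ℝ^n`. -/
noncomputable def l2norm {n : ℕ} (x : Fin n → ℝ) : ℝ := Real.sqrt (∑ i, (x i) ^ 2)

/-- Operator norm of a matrix with respect to Euclidean norms, `‖A‖₂`. -/
noncomputable def l2OpNorm {m n : ℕ} (A : Matrix (Fin m) (Fin n) ℝ) : ℝ :=
  sInf {c : ℝ | 0 ≤ c ∧ ∀ x : Fin n → ℝ, l2norm (A.mulVec x) ≤ c * l2norm x}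

/-- Coordinatewise clamp `φ(x)_i = min(1, max(−1, x_i))`. -/
noncomputable def clamp1 {n : ℕ} (x : Fin n → ℝ) : Fin n → ℝ := fun i => min 1 (max (-1) (x i))

/-!
Let `Φ` be the backward pass in the limit `t → ∞`: the top map
`x ↦ φ((A₁ x / V_u + g) / V_u^b)` followed by the layer maps `y ↦ φ(B_l y / (V_u V_u^b))` from
layer `N` down to layer `1`. As `φ` is `1`-Lipschitz, `Φ` is Lipschitz with constant
`‖A₁‖₂ ∏ ‖B_l‖₂ / (V_u V_u^b)^N ≤ γ < 1`, so it has a fixed point `β^{1*}`. The recursion reads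
`β¹[t+1] = Φ(β¹[t]) + o(1)`: the residuals `e^l[t+1] / (t+1)` vanish, and so does the effect of the
damping factor `t / (t+1)`, because `β¹[t]` is a clamped vector up to a bounded residual. A
contraction iterated with vanishing perturbations converges to its fixed point, and the other
layers follow by continuity of the layer maps.
-/

open Matrix

section L2Norm

variable {m k : ℕ}

lemma l2norm_eq_norm_toLp (x : Fin m → ℝ) : l2norm x = ‖WithLp.toLp 2 x‖ := by
  simp [l2norm, EuclideanSpace.norm_eq]

lemma l2norm_nonneg (x : Fin m → ℝ) : 0 ≤ l2norm x := Real.sqrt_nonneg _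

lemma l2norm_smul (r : ℝ) (x : Fin m → ℝ) : l2norm (r • x) = |r| * l2norm x := by
  simp only [l2norm_eq_norm_toLp, WithLp.toLp_smul, norm_smul, Real.norm_eq_abs]

lemma l2norm_neg (x : Fin m → ℝ) : l2norm (-x) = l2norm x := by
  rw [l2norm_eq_norm_toLp, l2norm_eq_norm_toLp, WithLp.toLp_neg, norm_neg]

lemma l2norm_add_le (x y : Fin m → ℝ) : l2norm (x + y) ≤ l2norm x + l2norm y := by
  simpa only [l2norm_eq_norm_toLp, WithLp.toLp_add] using norm_add_le _ _

lemma l2norm_sub_le (x y : Fin m → ℝ) : l2norm (x - y) ≤ l2norm x + l2norm y := by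
  simpa only [l2norm_eq_norm_toLp, WithLp.toLp_sub] using norm_sub_le _ _

lemma l2norm_sub_eq_dist (x y : Fin m → ℝ) :
    l2norm (x - y) = dist (WithLp.toLp 2 x) (WithLp.toLp 2 y) := by
  rw [dist_eq_norm, ← WithLp.toLp_sub, l2norm_eq_norm_toLp]

lemma tendsto_of_tendsto_l2norm_sub {x : ℕ → Fin m → ℝ} {a : Fin m → ℝ}
    (h : Tendsto (fun t => l2norm (x t - a)) atTop (𝓝 0)) : Tendsto x atTop (𝓝 a) := by
  simp only [l2norm_sub_eq_dist] at h
  exact ((PiLp.continuous_ofLp 2 _).tendsto _).comp (tendsto_iff_dist_tendsto_zero.2 h)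

lemma l2OpNorm_nonneg (A : Matrix (Fin m) (Fin k) ℝ) : 0 ≤ l2OpNorm A :=
  Real.sInf_nonneg fun _ hc => hc.1

lemma l2norm_mulVec_le (A : Matrix (Fin m) (Fin k) ℝ) (x : Fin k → ℝ) :
    l2norm (A *ᵥ x) ≤ l2OpNorm A * l2norm x := by
  open scoped Matrix.Norms.L2Operator in
  have hbound : ‖A‖ ∈ {c : ℝ | 0 ≤ c ∧ ∀ x : Fin k → ℝ, l2norm (A *ᵥ x) ≤ c * l2norm x} :=
    ⟨norm_nonneg A, fun x => by
      simpa [l2norm_eq_norm_toLp] using A.l2_opNorm_mulVec (WithLp.toLp 2 x)⟩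
  rcases (l2norm_nonneg x).eq_or_lt with hx | hx
  · simpa [← hx] using hbound.2 x
  · rw [← div_le_iff₀ hx]
    exact le_csInf ⟨_, hbound⟩ fun c hc => (div_le_iff₀ hx).2 (hc.2 x)

end L2Norm

section Lipschitz

variable {m k : ℕ}

def L2Lipschitz (K : ℝ) (f : (Fin k → ℝ) → Fin m → ℝ) : Prop :=
  ∀ x y, l2norm (f x - f y) ≤ K * l2norm (x - y)

lemma abs_clamp1_sub_le (x y : Fin m → ℝ) (i : Fin m) :
    |clamp1 x i - clamp1 y i| ≤ |x i - y i| := by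
  calc |clamp1 x i - clamp1 y i| ≤ |max (-1) (x i) - max (-1) (y i)| := by
        simpa [clamp1] using abs_min_sub_min_le_max 1 (max (-1) (x i)) 1 (max (-1) (y i))
    _ ≤ |x i - y i| := by simpa using abs_max_sub_max_le_max (-1) (x i) (-1) (y i)

lemma l2Lipschitz_clamp1 : L2Lipschitz 1 (clamp1 : (Fin m → ℝ) → Fin m → ℝ) := fun x y => by
  rw [one_mul]
  refine Real.sqrt_le_sqrt (Finset.sum_le_sum fun i _ => ?_)
  exact sq_le_sq.2 (by simpa using abs_clamp1_sub_le x y i)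

lemma l2norm_clamp1_le (x : Fin m → ℝ) : l2norm (clamp1 x) ≤ Real.sqrt m := by
  have hcoord (i : Fin m) : clamp1 x i ^ 2 ≤ 1 :=
    sq_le_one_iff_abs_le_one _ |>.2 <| abs_le.2
      ⟨le_min (by norm_num) (le_max_left _ _), min_le_left _ _⟩
  refine Real.sqrt_le_sqrt ((Finset.sum_le_sum fun i _ => hcoord i).trans ?_)
  simp

lemma L2Lipschitz.comp {K L : ℝ} {n : ℕ} {f : (Fin k → ℝ) → Fin m → ℝ}
    {g : (Fin n → ℝ) → Fin k → ℝ} (hf : L2Lipschitz K f) (hK : 0 ≤ K) (hg : L2Lipschitz L g) :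
    L2Lipschitz (K * L) (f ∘ g) := fun x y =>
  (hf _ _).trans <| by rw [mul_assoc]; exact mul_le_mul_of_nonneg_left (hg x y) hK

lemma L2Lipschitz.tendsto_l2norm_sub {K : ℝ} {f : (Fin k → ℝ) → Fin m → ℝ}
    (hf : L2Lipschitz K f) {u v : ℕ → Fin k → ℝ}
    (huv : Tendsto (fun t => l2norm (u t - v t)) atTop (𝓝 0)) :
    Tendsto (fun t => l2norm (f (u t) - f (v t))) atTop (𝓝 0) :=
  squeeze_zero (fun t => l2norm_nonneg _) (fun t => hf _ _) (by simpa using huv.const_mul K)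

lemma tendsto_l2norm_sub_trans {u v w : ℕ → Fin m → ℝ}
    (huv : Tendsto (fun t => l2norm (u t - v t)) atTop (𝓝 0))
    (hvw : Tendsto (fun t => l2norm (v t - w t)) atTop (𝓝 0)) :
    Tendsto (fun t => l2norm (u t - w t)) atTop (𝓝 0) :=
  squeeze_zero (fun t => l2norm_nonneg _)
    (fun t => by simpa using l2norm_add_le (u t - v t) (v t - w t)) (by simpa using huv.add hvw)

end Lipschitz

lemma tendsto_zero_of_le_mul_add {κ : ℝ} (hκ0 : 0 ≤ κ) (hκ1 : κ < 1) {d ε : ℕ → ℝ}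
    (hd : ∀ t, 0 ≤ d t) (hε : Tendsto ε atTop (𝓝 0)) (h : ∀ t, d (t + 1) ≤ κ * d t + ε t) :
    Tendsto d atTop (𝓝 0) := by
  refine tendsto_order.2 ⟨fun a ha => .of_forall fun t => ha.trans_le (hd t), fun δ hδ => ?_⟩
  obtain ⟨T, hT⟩ := eventually_atTop.1 <|
    hε.eventually (gt_mem_nhds (show 0 < (1 - κ) * (δ / 2) by nlinarith))
  have hgeom (s : ℕ) : d (T + s) - δ / 2 ≤ κ ^ s * d T := by
    induction s with
    | zero => simp; linarith
    | succ s ih =>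
      calc d (T + (s + 1)) - δ / 2 ≤ κ * (d (T + s) - δ / 2) := by
            rw [← add_assoc]; linarith [h (T + s), hT (T + s) (by omega)]
        _ ≤ κ ^ (s + 1) * d T := by
            rw [pow_succ', mul_assoc]; exact mul_le_mul_of_nonneg_left ih hκ0
  have hpow : Tendsto (fun s => κ ^ s * d T) atTop (𝓝 0) := by
    simpa using (tendsto_pow_atTop_nhds_zero_of_lt_one hκ0 hκ1).mul_const (d T)
  obtain ⟨S, hS⟩ := eventually_atTop.1 (hpow.eventually (gt_mem_nhds (half_pos hδ)))
  refine eventually_atTop.2 ⟨T + S, fun t ht => ?_⟩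
  obtain ⟨s, rfl⟩ := Nat.exists_eq_add_of_le (le_of_add_le_left ht)
  linarith [hgeom s, hS s (by omega)]

open NNReal in
theorem ContractingWith.tendsto_of_tendsto_dist_succ {α : Type*} [MetricSpace α] {K : ℝ≥0}
    {f : α → α} (hf : ContractingWith K f) {p : α} (hp : Function.IsFixedPt f p) {x : ℕ → α}
    (hx : Tendsto (fun t => dist (x (t + 1)) (f (x t))) atTop (𝓝 0)) :
    Tendsto x atTop (𝓝 p) := by
  refine tendsto_iff_dist_tendsto_zero.2 <|
    tendsto_zero_of_le_mul_add K.2 hf.1 (fun t => dist_nonneg) hx fun t => ?_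
  calc dist (x (t + 1)) p ≤ dist (x (t + 1)) (f (x t)) + dist (f (x t)) (f p) := by
        rw [hp.eq]; exact dist_triangle _ _ _
    _ ≤ dist (x (t + 1)) (f (x t)) + K * dist (x t) p := by
        gcongr; exact hf.2.dist_le_mul _ _
    _ = K * dist (x t) p + dist (x (t + 1)) (f (x t)) := add_comm _ _

lemma L2Lipschitz.exists_isFixedPt_tendsto {m : ℕ} {κ : ℝ} {F : (Fin m → ℝ) → Fin m → ℝ}
    (hF : L2Lipschitz κ F) (hκ0 : 0 ≤ κ) (hκ1 : κ < 1) {x : ℕ → Fin m → ℝ}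
    (hx : Tendsto (fun t => l2norm (x (t + 1) - F (x t))) atTop (𝓝 0)) :
    ∃ p, Function.IsFixedPt F p ∧ Tendsto (fun t => l2norm (x t - p)) atTop (𝓝 0) := by
  let Φ (v : EuclideanSpace ℝ (Fin m)) : EuclideanSpace ℝ (Fin m) := WithLp.toLp 2 (F v.ofLp)
  have hΦ : ContractingWith ⟨κ, hκ0⟩ Φ :=
    ⟨hκ1, LipschitzWith.of_dist_le_mul fun v w => by
      have := hF v.ofLp w.ofLp
      rwa [l2norm_sub_eq_dist, l2norm_sub_eq_dist, WithLp.toLp_ofLp, WithLp.toLp_ofLp] at this⟩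
  refine ⟨(ContractingWith.fixedPoint Φ hΦ).ofLp,
    congrArg WithLp.ofLp (ContractingWith.fixedPoint_isFixedPt hΦ), ?_⟩
  have hconv := hΦ.tendsto_of_tendsto_dist_succ (ContractingWith.fixedPoint_isFixedPt hΦ)
    (x := fun t => WithLp.toLp 2 (x t)) (by simpa [Φ, l2norm_sub_eq_dist] using hx)
  simpa [l2norm_sub_eq_dist] using tendsto_iff_dist_tendsto_zero.1 hconv

section BackwardMap

variable {m k : ℕ} (Vu Vub : ℝ) (A : Matrix (Fin m) (Fin k) ℝ) (b : Fin m → ℝ)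

noncomputable def backwardMap (x : Fin k → ℝ) : Fin m → ℝ :=
  clamp1 ((1 / Vub) • ((1 / Vu) • A *ᵥ x + b))

lemma backwardMap_smul (r : ℝ) (x : Fin k → ℝ) :
    backwardMap Vu Vub A b (r • x) = clamp1 ((1 / Vub) • (r • ((1 / Vu) • A *ᵥ x) + b)) := by
  rw [backwardMap, mulVec_smul, smul_comm]

lemma backwardMap_zero (x : Fin k → ℝ) :
    backwardMap Vu Vub A 0 x = clamp1 ((1 / Vub) • ((1 / Vu) • A *ᵥ x)) := by
  rw [backwardMap, add_zero]

lemma l2Lipschitz_backwardMap :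
    L2Lipschitz (l2OpNorm A / |Vu * Vub|) (backwardMap Vu Vub A b) := fun x y => by
  refine (l2Lipschitz_clamp1 _ _).trans ?_
  rw [one_mul, ← smul_sub, add_sub_add_right_eq_sub, ← smul_sub, ← mulVec_sub, l2norm_smul,
    l2norm_smul, ← mul_assoc, ← abs_mul, one_div_mul_one_div, mul_comm Vub, div_mul_eq_mul_div,
    abs_div, abs_one, one_div_mul_eq_div]
  exact div_le_div_of_nonneg_right (l2norm_mulVec_le A _) (abs_nonneg _)

end BackwardMap

section Descend

variable {n : ℕ → ℕ} (N : ℕ) (G : ∀ l, (Fin (n (l + 1)) → ℝ) → Fin (n l) → ℝ)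

/-- `descend N G l = G l ∘ G (l + 1) ∘ ⋯ ∘ G (N - 1)` carries layer `N` down to layer `l`;
its value `0` for `l > N` is junk. -/
noncomputable def descend (l : ℕ) : (Fin (n N) → ℝ) → Fin (n l) → ℝ :=
  if l < N then G l ∘ descend (l + 1)
  else if hN : l = N then fun x => hN ▸ x
  else 0
termination_by N - l

lemma descend_self : descend N G N = id := by
  rw [descend, if_neg (lt_irrefl N), dif_pos rfl]
  rfl

lemma descend_of_lt {l : ℕ} (hl : l < N) : descend N G l = G l ∘ descend N G (l + 1) := by
  rw [descend, if_pos hl]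

variable {N G} {K : ℕ → ℝ}

lemma l2Lipschitz_descend (hG : ∀ l, L2Lipschitz (K (l + 1)) (G l)) (hK : ∀ l, 0 ≤ K l)
    {l : ℕ} (hl : l ≤ N) :
    L2Lipschitz (∏ j ∈ Finset.Ioc l N, K j) (descend N G l) := by
  induction hl using Nat.decreasingInduction with
  | self => simp [descend_self, L2Lipschitz]
  | of_succ l hl ih =>
    rw [descend_of_lt N G hl, ← Finset.prod_Ioc_consecutive _ (Nat.le_succ l) hl,
      Nat.Ioc_succ_singleton, Finset.prod_singleton]
    exact (hG l).comp (hK _) ih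

lemma tendsto_l2norm_sub_descend (hG : ∀ l, L2Lipschitz (K (l + 1)) (G l)) {a : ℕ}
    {y : (l : ℕ) → ℕ → Fin (n l) → ℝ}
    (hy : ∀ l, a ≤ l → l < N →
      Tendsto (fun t => l2norm (y l t - G l (y (l + 1) t))) atTop (𝓝 0))
    {l : ℕ} (hal : a ≤ l) (hl : l ≤ N) :
    Tendsto (fun t => l2norm (y l t - descend N G l (y N t))) atTop (𝓝 0) := by
  induction hl using Nat.decreasingInduction with
  | self => simp [descend_self, l2norm]
  | of_succ l hl ih =>
    rw [descend_of_lt N G hl]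
    exact tendsto_l2norm_sub_trans (hy l hal hl) ((hG l).tendsto_l2norm_sub (ih (by omega)))

end Descend

section Residuals

variable {m : ℕ}

lemma tendsto_l2norm_one_div_succ_smul {e : ℕ → Fin m → ℝ} {C : ℝ}
    (he : ∀ᶠ t in atTop, l2norm (e t) ≤ C) :
    Tendsto (fun t : ℕ => l2norm ((1 / ((t : ℝ) + 1)) • e t)) atTop (𝓝 0) := by
  refine squeeze_zero' (.of_forall fun t => l2norm_nonneg _) (he.mono fun t ht => ?_)
    (by simpa only [zero_mul] using tendsto_one_div_add_atTop_nhds_zero_nat.mul_const C)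
  rw [l2norm_smul, abs_of_pos (by positivity)]
  exact mul_le_mul_of_nonneg_left ht (by positivity)

lemma tendsto_l2norm_sub_of_eq_sub_error {u v e : ℕ → Fin m → ℝ} (c : ℝ)
    (he : ∃ C, ∀ t, 1 ≤ t → l2norm (e t) ≤ C)
    (huv : ∀ t, u t = v t - c • ((1 / ((t : ℝ) + 1)) • e (t + 1))) :
    Tendsto (fun t => l2norm (u t - v t)) atTop (𝓝 0) := by
  obtain ⟨C, hC⟩ := he
  have := (tendsto_l2norm_one_div_succ_smul (e := fun t => e (t + 1))
    (.of_forall fun t => hC (t + 1) (Nat.le_add_left 1 t))).const_mul |c|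
  simpa [huv, l2norm_neg, l2norm_smul] using this

lemma eventually_l2norm_le_of_eq_clamp1_sub {x y e : ℕ → Fin m → ℝ} (c : ℝ)
    (he : ∃ C, ∀ t, 1 ≤ t → l2norm (e t) ≤ C)
    (hx : ∀ t, x (t + 1) = clamp1 (y t) - c • ((1 / ((t : ℝ) + 1)) • e (t + 1))) :
    ∃ C, ∀ᶠ t in atTop, l2norm (x t) ≤ C := by
  obtain ⟨C, hC⟩ := he
  refine ⟨Real.sqrt m + |c| * C, eventually_atTop.2 ⟨1, fun t ht => ?_⟩⟩
  obtain ⟨s, rfl⟩ := Nat.exists_eq_add_of_le' ht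
  have hs : 1 / ((s : ℝ) + 1) ≤ 1 := div_le_one_of_le₀ (by simp) (by positivity)
  rw [hx s]
  refine (l2norm_sub_le _ _).trans (add_le_add (l2norm_clamp1_le _) ?_)
  rw [l2norm_smul, l2norm_smul, abs_of_pos (by positivity : (0 : ℝ) < 1 / ((s : ℝ) + 1))]
  gcongr
  exact (mul_le_of_le_one_left (l2norm_nonneg _) hs).trans (hC _ ht)

lemma L2Lipschitz.tendsto_l2norm_sub_div_succ_smul {k : ℕ} {K C : ℝ}
    {f : (Fin m → ℝ) → Fin k → ℝ} (hf : L2Lipschitz K f) {x : ℕ → Fin m → ℝ}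
    (hx : ∀ᶠ t in atTop, l2norm (x t) ≤ C) :
    Tendsto (fun t : ℕ => l2norm (f (((t : ℝ) / ((t : ℝ) + 1)) • x t) - f (x t)))
      atTop (𝓝 0) := by
  refine hf.tendsto_l2norm_sub ?_
  have hdiff (t : ℕ) :
      ((t : ℝ) / ((t : ℝ) + 1)) • x t - x t = -((1 / ((t : ℝ) + 1)) • x t) := by
    have hcoef : (t : ℝ) / ((t : ℝ) + 1) = 1 - 1 / ((t : ℝ) + 1) := by field_simp; ring
    rw [hcoef, sub_smul, one_smul, sub_sub_cancel_left]
  simpa only [hdiff, l2norm_neg] using tendsto_l2norm_one_div_succ_smul hx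

end Residuals

lemma prod_Ioc_div_mul_div_lt_one {N : ℕ} (hN : 1 ≤ N) {a c γ : ℝ} {b : ℕ → ℝ} (hc : 0 < c)
    (hγ : γ < 1) (hab : a * ∏ j ∈ Finset.Icc 2 N, b j ≤ γ * c ^ N) :
    (∏ j ∈ Finset.Ioc 1 N, b j / c) * (a / c) < 1 := by
  have hpow : c ^ (N - 1) * c = c ^ N := by rw [← pow_succ, Nat.sub_add_cancel hN]
  rw [Finset.prod_div_distrib, Finset.prod_const, Nat.card_Ioc,
    ← Finset.Icc_add_one_left_eq_Ioc, div_mul_div_comm, hpow, mul_comm, div_lt_one (by positivity)]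
  exact hab.trans_lt (mul_lt_of_lt_one_left (by positivity) hγ)

theorem exists_isFixedPt_tendsto_descend {n : ℕ → ℕ} {N : ℕ} (hN : 1 ≤ N)
    {G : ∀ l, (Fin (n (l + 1)) → ℝ) → Fin (n l) → ℝ} {K : ℕ → ℝ}
    (hG : ∀ l, L2Lipschitz (K (l + 1)) (G l)) (hK : ∀ l, 0 ≤ K l)
    {H : (Fin (n 1) → ℝ) → Fin (n N) → ℝ} {c : ℝ} (hH : L2Lipschitz c H) (hc : 0 ≤ c)
    (hκ : (∏ j ∈ Finset.Ioc 1 N, K j) * c < 1) {β : (l : ℕ) → ℕ → Fin (n l) → ℝ}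
    (htop : Tendsto (fun t => l2norm (β N (t + 1) - H (β 1 t))) atTop (𝓝 0))
    (hlayer : ∀ l, 1 ≤ l → l < N →
      Tendsto (fun t => l2norm (β l (t + 1) - G l (β (l + 1) (t + 1)))) atTop (𝓝 0)) :
    ∃ x, Function.IsFixedPt (descend N G 1 ∘ H) x ∧
      ∀ l, 1 ≤ l → l ≤ N → Tendsto (β l) atTop (𝓝 (descend N G l (H x))) := by
  have hΦ {l : ℕ} (hl : l ≤ N) :=
    (l2Lipschitz_descend hG hK hl).comp (Finset.prod_nonneg fun j _ => hK j) hH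
  have hclose {l : ℕ} (h1 : 1 ≤ l) (hl : l ≤ N) :
      Tendsto (fun t => l2norm (β l (t + 1) - descend N G l (H (β 1 t)))) atTop (𝓝 0) :=
    tendsto_l2norm_sub_trans
      (tendsto_l2norm_sub_descend hG (y := fun l t => β l (t + 1)) hlayer h1 hl)
      ((l2Lipschitz_descend hG hK hl).tendsto_l2norm_sub htop)
  obtain ⟨x, hx, hconv⟩ := (hΦ hN).exists_isFixedPt_tendsto
    (mul_nonneg (Finset.prod_nonneg fun j _ => hK j) hc) hκ (hclose le_rfl hN)
  refine ⟨x, hx, fun l h1 hl => (tendsto_add_atTop_iff_nat 1).1 ?_⟩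
  exact tendsto_of_tendsto_l2norm_sub <|
    tendsto_l2norm_sub_trans (hclose h1 hl) ((hΦ hl).tendsto_l2norm_sub (v := fun _ => x) hconv)

theorem stmt2_general (N : ℕ) (hN : 2 ≤ N) (n : ℕ → ℕ)
    (Vu Vub : ℝ) (hVu : 0 < Vu) (hVub : 0 < Vub)
    (A1 : Matrix (Fin (n N)) (Fin (n 1)) ℝ)
    (B : (l : ℕ) → Matrix (Fin (n (l - 1))) (Fin (n l)) ℝ)
    (g : Fin (n N) → ℝ)
    (e : (l : ℕ) → ℕ → Fin (n l) → ℝ)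
    (he : ∀ l, 1 ≤ l → l ≤ N → ∃ C : ℝ, ∀ t : ℕ, 1 ≤ t → l2norm (e l t) ≤ C)
    (β : (l : ℕ) → ℕ → Fin (n l) → ℝ)
    (hβN : ∀ t : ℕ, β N (t + 1) =
      clamp1 ((1 / Vub) • (((t : ℝ) / ((t : ℝ) + 1)) • ((1 / Vu) • A1.mulVec (β 1 t)) + g))
        - (1 / Vub) • ((1 / ((t : ℝ) + 1)) • e N (t + 1)))
    (hβl : ∀ l, 1 ≤ l → l ≤ N - 1 → ∀ t : ℕ, β l (t + 1) =
      (clamp1 ((1 / Vub) • ((1 / Vu) • (B (l + 1)).mulVec (β (l + 1) (t + 1)))) :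
          Fin (n l) → ℝ)
        - (1 / Vub) • ((1 / ((t : ℝ) + 1)) • e l (t + 1)))
    (hA : ∃ γ : ℝ, γ < 1 ∧
      l2OpNorm A1 * ∏ l ∈ Finset.Icc 2 N, l2OpNorm (B l) ≤ γ * Vu ^ N * Vub ^ N) :
    ∃ βstar : (l : ℕ) → Fin (n l) → ℝ,
      (∀ l, 1 ≤ l → l ≤ N → Tendsto (β l) atTop (𝓝 (βstar l))) ∧
      βstar N = clamp1 ((1 / Vub) • ((1 / Vu) • A1.mulVec (βstar 1) + g)) ∧
      ∀ l, 1 ≤ l → l ≤ N - 1 →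
        βstar l = (clamp1 ((1 / Vub) • ((1 / Vu) • (B (l + 1)).mulVec (βstar (l + 1)))) :
          Fin (n l) → ℝ) := by
  obtain ⟨γ, hγ1, hγ⟩ := hA
  have hN1 : 1 ≤ N := by omega
  set H := backwardMap Vu Vub A1 g
  set G : ∀ l, (Fin (n (l + 1)) → ℝ) → Fin (n l) → ℝ :=
    fun l => backwardMap Vu Vub (B (l + 1)) 0
  have hK {k m : ℕ} (A : Matrix (Fin k) (Fin m) ℝ) : 0 ≤ l2OpNorm A / |Vu * Vub| :=
    div_nonneg (l2OpNorm_nonneg A) (abs_nonneg _)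
  have hκ :
      (∏ j ∈ Finset.Ioc 1 N, l2OpNorm (B j) / |Vu * Vub|) * (l2OpNorm A1 / |Vu * Vub|) < 1 :=
    prod_Ioc_div_mul_div_lt_one hN1 (by positivity) hγ1
      (by rwa [abs_of_pos (by positivity), mul_pow, ← mul_assoc])
  obtain ⟨C, hC⟩ :=
    eventually_l2norm_le_of_eq_clamp1_sub _ (he 1 le_rfl hN1) (hβl 1 le_rfl (by omega))
  have htop : Tendsto (fun t => l2norm (β N (t + 1) - H (β 1 t))) atTop (𝓝 0) :=
    tendsto_l2norm_sub_trans
      (tendsto_l2norm_sub_of_eq_sub_error _ (he N hN1 le_rfl) fun t => by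
        rw [hβN t, backwardMap_smul])
      ((l2Lipschitz_backwardMap Vu Vub A1 g).tendsto_l2norm_sub_div_succ_smul hC)
  obtain ⟨x, hx, hconv⟩ := exists_isFixedPt_tendsto_descend hN1 (G := G)
    (fun l => l2Lipschitz_backwardMap _ _ _ _) (fun j => hK (B j))
    (l2Lipschitz_backwardMap Vu Vub A1 g) (hK A1) hκ htop fun l h1 hl =>
      tendsto_l2norm_sub_of_eq_sub_error _ (he l h1 hl.le) fun t => by
        rw [hβl l h1 (by omega) t, ← backwardMap_zero]
  refine ⟨fun l => descend N G l (H x), hconv, ?_, fun l h1 hl => ?_⟩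
  · simp only [descend_self, id]
    exact congrArg H hx.eq.symm
  · simp only [descend_of_lt N G (show l < N by omega), Function.comp_apply, G, backwardMap_zero]

theorem stmt2 (N : ℕ) (hN : 2 ≤ N) (n : ℕ → ℕ) (hn : ∀ l, 1 ≤ l → l ≤ N → 0 < n l)
    (Vu Vub : ℝ) (hVu : 0 < Vu) (hVub : 0 < Vub)
    (A1 : Matrix (Fin (n N)) (Fin (n 1)) ℝ)
    (B : (l : ℕ) → Matrix (Fin (n (l - 1))) (Fin (n l)) ℝ)
    (g : Fin (n N) → ℝ)
    (e : (l : ℕ) → ℕ → Fin (n l) → ℝ)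
    (he : ∀ l, 1 ≤ l → l ≤ N → ∃ C : ℝ, ∀ t : ℕ, 1 ≤ t → l2norm (e l t) ≤ C)
    (β : (l : ℕ) → ℕ → Fin (n l) → ℝ)
    (hβ0 : ∀ l, β l 0 = 0)
    (hβN : ∀ t : ℕ, β N (t + 1) =
      clamp1 ((1 / Vub) • (((t : ℝ) / ((t : ℝ) + 1)) • ((1 / Vu) • A1.mulVec (β 1 t)) + g))
        - (1 / Vub) • ((1 / ((t : ℝ) + 1)) • e N (t + 1)))
    (hβl : ∀ l, 1 ≤ l → l ≤ N - 1 → ∀ t : ℕ, β l (t + 1) =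
      (clamp1 ((1 / Vub) • ((1 / Vu) • (B (l + 1)).mulVec (β (l + 1) (t + 1)))) :
          Fin (n l) → ℝ)
        - (1 / Vub) • ((1 / ((t : ℝ) + 1)) • e l (t + 1)))
    (hA : ∃ γ : ℝ, γ < 1 ∧
      l2OpNorm A1 * ∏ l ∈ Finset.Icc 2 N, l2OpNorm (B l) ≤ γ * Vu ^ N * Vub ^ N) :
    ∃ βstar : (l : ℕ) → Fin (n l) → ℝ,
      (∀ l, 1 ≤ l → l ≤ N → Tendsto (β l) atTop (𝓝 (βstar l))) ∧
      βstar N = clamp1 ((1 / Vub) • ((1 / Vu) • A1.mulVec (βstar 1) + g)) ∧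
      ∀ l, 1 ≤ l → l ≤ N - 1 →
        βstar l = (clamp1 ((1 / Vub) • ((1 / Vu) • (B (l + 1)).mulVec (βstar (l + 1)))) :
          Fin (n l) → ℝ) :=
  stmt2_general N hN n Vu Vub hVu hVub A1 B g e he β hβN hβl hA
end

section
/- Let n be a positive integer, A an n×n real matrix, g ∈ ℝ^n, and suppose β ∈ ℝ^n satisfies β = φ(A·β + g). If there exists λ < 1 such that ‖A‖_∞ ≤ λ and ‖g‖_∞ ≤ 1 − λ, then ‖β‖_∞ ≤ ‖g‖_∞/(1 − λ) ≤ 1 and ‖A·β + g‖_∞ ≤ 1, and consequently β = A·β + g. -/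
/-! The clamp keeps `‖β‖_∞ ≤ 1`, so `‖Aβ + g‖_∞ ≤ λ‖β‖_∞ + ‖g‖_∞ ≤ λ + (1 - λ) = 1`;
hence the clamp acts as the identity on `Aβ + g` and `β = Aβ + g`. Then
`‖β‖_∞ ≤ λ‖β‖_∞ + ‖g‖_∞`, which rearranges to `‖β‖_∞ ≤ ‖g‖_∞ / (1 - λ)`. -/

/-- Sup norm `‖x‖_∞ = max_i |x_i|`. -/
noncomputable def supNorm {n : ℕ} (x : Fin n → ℝ) : ℝ := ⨆ i, |x i|

/-- Operator norm of a matrix with respect to sup norms, `‖A‖_∞`. -/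
noncomputable def supOpNorm {m n : ℕ} (A : Matrix (Fin m) (Fin n) ℝ) : ℝ :=
  sInf {c : ℝ | 0 ≤ c ∧ ∀ x : Fin n → ℝ, supNorm (A.mulVec x) ≤ c * supNorm x}

lemma supNorm_eq_norm {n : ℕ} (x : Fin n → ℝ) : supNorm x = ‖x‖ := by
  have hbdd : BddAbove (Set.range fun i => |x i|) := (Set.finite_range _).bddAbove
  refine le_antisymm (Real.iSup_le (fun i => norm_le_pi_norm x i) (norm_nonneg x)) ?_
  exact (pi_norm_le_iff_of_nonneg (Real.iSup_nonneg fun i => abs_nonneg (x i))).mpr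
    fun i => le_ciSup hbdd i

lemma supOpNorm_eq_opNorm {m n : ℕ} (A : Matrix (Fin m) (Fin n) ℝ) :
    supOpNorm A = ‖LinearMap.toContinuousLinearMap A.mulVecLin‖ := by
  simp only [supOpNorm, supNorm_eq_norm, ContinuousLinearMap.norm_def,
    LinearMap.coe_toContinuousLinearMap', Matrix.mulVecLin_apply]

lemma supOpNorm_nonneg {m n : ℕ} (A : Matrix (Fin m) (Fin n) ℝ) : 0 ≤ supOpNorm A :=
  supOpNorm_eq_opNorm A ▸ norm_nonneg _

lemma norm_mulVec_le_supOpNorm_mul {m n : ℕ} (A : Matrix (Fin m) (Fin n) ℝ) (x : Fin n → ℝ) :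
    ‖A.mulVec x‖ ≤ supOpNorm A * ‖x‖ := by
  simpa only [supOpNorm_eq_opNorm, LinearMap.coe_toContinuousLinearMap',
    Matrix.mulVecLin_apply] using
    (LinearMap.toContinuousLinearMap A.mulVecLin).le_opNorm x

lemma norm_clamp1_le_one {n : ℕ} (x : Fin n → ℝ) : ‖clamp1 x‖ ≤ 1 :=
  (pi_norm_le_iff_of_nonneg zero_le_one).mpr fun i =>
    abs_le.mpr ⟨le_min (by norm_num) (le_max_left _ _), min_le_left _ _⟩

lemma clamp1_eq_self_of_norm_le_one {n : ℕ} {x : Fin n → ℝ} (hx : ‖x‖ ≤ 1) : clamp1 x = x := by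
  funext i
  obtain ⟨hlow, hup⟩ := abs_le.mp ((norm_le_pi_norm x i).trans hx)
  rw [clamp1, max_eq_right hlow, min_eq_right hup]

theorem stmt9_general (n : ℕ) (A : Matrix (Fin n) (Fin n) ℝ) (g : Fin n → ℝ)
    (β : Fin n → ℝ) (hβ : β = clamp1 (A.mulVec β + g))
    (lam : ℝ) (hlam : lam < 1) (hA : supOpNorm A ≤ lam) (hg : supNorm g ≤ 1 - lam) :
    supNorm β ≤ supNorm g / (1 - lam) ∧ supNorm g / (1 - lam) ≤ 1 ∧
      supNorm (A.mulVec β + g) ≤ 1 ∧ β = A.mulVec β + g := by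
  simp only [supNorm_eq_norm] at hg ⊢
  have hlam0 : 0 ≤ lam := (supOpNorm_nonneg A).trans hA
  have hgap : 0 < 1 - lam := sub_pos.mpr hlam
  have hβ_le_one : ‖β‖ ≤ 1 := hβ ▸ norm_clamp1_le_one _
  have hcontr : ‖A.mulVec β + g‖ ≤ lam * ‖β‖ + ‖g‖ :=
    (norm_add_le _ _).trans <| add_le_add_left
      ((norm_mulVec_le_supOpNorm_mul A β).trans (by gcongr)) _
  have hfix_le_one : ‖A.mulVec β + g‖ ≤ 1 := by nlinarith
  have hfix : β = A.mulVec β + g := hβ.trans (clamp1_eq_self_of_norm_le_one hfix_le_one)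
  refine ⟨?_, (div_le_one hgap).mpr hg, hfix_le_one, hfix⟩
  have hβ_contr : ‖β‖ ≤ lam * ‖β‖ + ‖g‖ := (congrArg norm hfix).trans_le hcontr
  rw [le_div_iff₀ hgap]
  linarith

/-- ∞-norm fixed-point bound: if `β = φ(Aβ + g)`, `‖A‖_∞ ≤ λ < 1` and `‖g‖_∞ ≤ 1 − λ`, then
`‖β‖_∞ ≤ ‖g‖_∞/(1 − λ) ≤ 1`, `‖Aβ + g‖_∞ ≤ 1`, and the clamp is inactive: `β = Aβ + g`. -/
theorem stmt9 (n : ℕ) (hn : 0 < n) (A : Matrix (Fin n) (Fin n) ℝ) (g : Fin n → ℝ)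
    (β : Fin n → ℝ) (hβ : β = clamp1 (A.mulVec β + g))
    (lam : ℝ) (hlam : lam < 1) (hA : supOpNorm A ≤ lam) (hg : supNorm g ≤ 1 - lam) :
    supNorm β ≤ supNorm g / (1 - lam) ∧ supNorm g / (1 - lam) ≤ 1 ∧
      supNorm (A.mulVec β + g) ≤ 1 ∧ β = A.mulVec β + g :=
  stmt9_general n A g β hβ lam hlam hA hg
end
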